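/- For all trace-free A₁, A₂, A₃, A₄ ∈ SL(2,ℂ), the 4×4 complex matrix with entries −tr(A_p A_q) for 1 ≤ p, q ≤ 4 (whose diagonal entries are all 2) has determinant 0. (This is the rectangle relation (R), satisfied by every tuple of traces coming from trace-free SL(2,ℂ) matrices.) -/

import Mathlib

/-!
On trace-free `2 × 2` matrices, `(X, Y) ↦ -tr(XY)` is a symmetric bilinear form, and the trace-free
matrices form a space of dimension `3`. The matrix `(-tr(A_p A_q))_{p,q}` is therefore a Gram matrix
of four vectors in a three-dimensional space, so it factors through `R³` and has rank at most `3`.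
-/

open Matrix

abbrev SL2C := Matrix.SpecialLinearGroup (Fin 2) ℂ

noncomputable def trSL2 (A : SL2C) : ℂ := Matrix.trace (A : Matrix (Fin 2) (Fin 2) ℂ)

namespace Matrix

variable {R : Type*} [CommRing R]

theorem det_mul_eq_zero_of_card_lt [IsDomain R] {m n : Type*} [Fintype m] [Fintype n]
    [DecidableEq n] (U : Matrix n m R) (V : Matrix m n R) (h : Fintype.card m < Fintype.card n) :
    (U * V).det = 0 := by
  by_contra hdet
  have hfull := rank_of_det_ne_zero hdet
  have hlow := (rank_mul_le_left U V).trans U.rank_le_card_width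
  omega

/-- Coordinates `(a, b, c)` of a trace-free matrix `!![a, b; c, -a]`. -/
def traceFreeCoords (X : Matrix (Fin 2) (Fin 2) R) : Fin 3 → R := ![X 0 0, X 0 1, X 1 0]

def negTraceFormMatrix : Matrix (Fin 3) (Fin 3) R := !![-2, 0, 0; 0, 0, -1; 0, -1, 0]

theorem neg_trace_mul_eq_dotProduct {X Y : Matrix (Fin 2) (Fin 2) R} (hX : X.trace = 0)
    (hY : Y.trace = 0) :
    -(X * Y).trace = traceFreeCoords X ⬝ᵥ (negTraceFormMatrix *ᵥ traceFreeCoords Y) := by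
  rw [trace_fin_two] at hX hY
  simp only [trace_fin_two, mul_apply, Fin.sum_univ_succ, Finset.univ_unique, Fin.default_eq_zero,
    Finset.sum_singleton, Fin.succ_zero_eq_one, dotProduct, traceFreeCoords, mulVec,
    negTraceFormMatrix, of_apply, cons_val', cons_val_fin_one, cons_val_zero, cons_val_succ]
  linear_combination X 0 0 * hY - Y 1 1 * hX

theorem det_neg_trace_mul_eq_zero [IsDomain R] {k : Type*} [Fintype k] [DecidableEq k]
    (hk : 3 < Fintype.card k) (X : k → Matrix (Fin 2) (Fin 2) R) (hX : ∀ p, (X p).trace = 0) :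
    (of fun p q => -(X p * X q).trace).det = 0 := by
  let C : Matrix k (Fin 3) R := of fun p => traceFreeCoords (X p)
  have hgram : (of fun p q => -(X p * X q).trace) =
      C * ((negTraceFormMatrix : Matrix (Fin 3) (Fin 3) R) * Cᵀ) := by
    ext p q
    rw [of_apply, neg_trace_mul_eq_dotProduct (hX p) (hX q)]
    rfl
  rw [hgram]
  exact det_mul_eq_zero_of_card_lt _ _ (by simpa using hk)

end Matrix

theorem stmt8 (A : Fin 4 → SL2C) (hA : ∀ p, trSL2 (A p) = 0) :
    Matrix.det (Matrix.of fun p q : Fin 4 => -trSL2 (A p * A q)) = 0 :=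
  det_neg_trace_mul_eq_zero (by simp) (fun p => (A p : Matrix (Fin 2) (Fin 2) ℂ)) hA
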